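/- Let P₁, P₂ be finite point sets in ℝ² of odd sizes 2a+1 and 2b+1 respectively, with P₁ ∪ P₂ in general position and with the convex hulls of P₁ and P₂ disjoint. Then there exist points p₁ ∈ P₁ and p₂ ∈ P₂ such that the line through p₁ and p₂ has exactly a points of P₁ and exactly b points of P₂ on each of its two open sides. -/

import Mathlib

/-!
Separate the two sets by a linear functional `f`, smaller on `P₁` than on `P₂`, and pick a
functional `g` linearly independent of `f`. For `φ_c = c • f - g`, the median of `φ_c` on `P₁`
minus its median on `P₂` is continuous in `c`; it is negative for `c ≫ 0`, where `φ_c` puts all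
of `P₁` below all of `P₂`, and positive for `c ≪ 0`. At a zero `c`, the level line of `φ_c`
through the common median value contains a median point of each set and, by general position, no
other point of `P₁ ∪ P₂`; so each open side holds exactly `a` points of `P₁` and `b` of `P₂`.
-/

open Finset Filter Module

section OrderStatistic

variable {α : Type*}

/-- The `(k + 1)`-th smallest value of `w` on `s`, counted with multiplicity, written as a min-max
so that it is visibly continuous in `w`. -/
noncomputable def orderStat (s : Finset α) (k : ℕ) (w : α → ℝ) : ℝ :=
  if h : (s.powersetCard (k + 1)).Nonempty then
    (s.powersetCard (k + 1)).inf' h fun t => if ht : t.Nonempty then t.sup' ht w else 0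
  else 0

lemma nonempty_of_mem_powersetCard_succ {s t : Finset α} {k : ℕ}
    (ht : t ∈ s.powersetCard (k + 1)) : t.Nonempty :=
  card_pos.1 <| by rw [(mem_powersetCard.1 ht).2]; omega

lemma exists_le_apply_of_mem_powersetCard {s t : Finset α} {k : ℕ} (w : α → ℝ)
    (ht : t ∈ s.powersetCard (k + 1)) : ∃ p ∈ t, orderStat s k w ≤ w p := by
  have htne := nonempty_of_mem_powersetCard_succ ht
  obtain ⟨p, hp, hpmax⟩ := exists_mem_eq_sup' htne w
  refine ⟨p, hp, ?_⟩
  rw [orderStat, dif_pos ⟨t, ht⟩, ← hpmax]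
  simpa [htne] using inf'_le (fun t => if ht : t.Nonempty then t.sup' ht w else 0) ht

lemma exists_powersetCard_forall_le_orderStat {s : Finset α} {k : ℕ} (hk : k < #s)
    (w : α → ℝ) :
    ∃ t ∈ s.powersetCard (k + 1), (∀ p ∈ t, w p ≤ orderStat s k w) ∧
      ∃ p ∈ t, w p = orderStat s k w := by
  have hne : (s.powersetCard (k + 1)).Nonempty := powersetCard_nonempty.2 hk
  obtain ⟨t, ht, htmin⟩ :=
    exists_mem_eq_inf' hne fun t => if ht : t.Nonempty then t.sup' ht w else 0
  have htne := nonempty_of_mem_powersetCard_succ ht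
  have hval : orderStat s k w = t.sup' htne w := by
    rw [orderStat, dif_pos hne, htmin, dif_pos htne]
  obtain ⟨p, hp, hpmax⟩ := exists_mem_eq_sup' htne w
  exact ⟨t, ht, fun q hq => hval ▸ le_sup' w hq, p, hp, by rw [hval, hpmax]⟩

lemma exists_mem_apply_eq_orderStat {s : Finset α} {k : ℕ} (hk : k < #s) (w : α → ℝ) :
    ∃ p ∈ s, w p = orderStat s k w := by
  obtain ⟨t, ht, -, p, hp, hpw⟩ := exists_powersetCard_forall_le_orderStat hk w
  exact ⟨p, (mem_powersetCard.1 ht).1 hp, hpw⟩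

lemma card_filter_lt_orderStat_le (s : Finset α) (k : ℕ) (w : α → ℝ) :
    #{p ∈ s | w p < orderStat s k w} ≤ k := by
  by_contra! hlt
  obtain ⟨t, hts, htcard⟩ := exists_subset_card_eq (Nat.succ_le_of_lt hlt)
  obtain ⟨p, hp, hle⟩ := exists_le_apply_of_mem_powersetCard w
    (mem_powersetCard.2 ⟨hts.trans (filter_subset _ s), htcard⟩)
  exact (mem_filter.1 (hts hp)).2.not_ge hle

lemma lt_card_filter_le_orderStat {s : Finset α} {k : ℕ} (hk : k < #s) (w : α → ℝ) :
    k < #{p ∈ s | w p ≤ orderStat s k w} := by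
  obtain ⟨t, ht, hle, -⟩ := exists_powersetCard_forall_le_orderStat hk w
  rw [mem_powersetCard] at ht
  calc k < #t := by omega
    _ ≤ _ := card_le_card fun p hp => mem_filter.2 ⟨ht.1 hp, hle p hp⟩

lemma card_filter_lt_orderStat_and_card_filter_orderStat_lt {s : Finset α} {k : ℕ} (hk : k < #s)
    (w : α → ℝ) (huniq : #{p ∈ s | w p = orderStat s k w} ≤ 1) :
    #{p ∈ s | w p < orderStat s k w} = k ∧
      #{p ∈ s | orderStat s k w < w p} = #s - (k + 1) := by
  classical
  have hlt := card_filter_lt_orderStat_le s k w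
  have hle := lt_card_filter_le_orderStat hk w
  set v := orderStat s k w
  have hle_split : #{p ∈ s | w p ≤ v} ≤ #{p ∈ s | w p < v} + 1 := by
    calc #{p ∈ s | w p ≤ v} = #({p ∈ s | w p < v} ∪ {p ∈ s | w p = v}) := by
          simp only [← filter_or, le_iff_lt_or_eq]
      _ ≤ _ := (card_union_le _ _).trans (by omega)
  have hcompl : #{p ∈ s | w p ≤ v} + #{p ∈ s | v < w p} = #s := by
    simpa only [not_le] using card_filter_add_card_filter_not (s := s) (w · ≤ v)
  omega

lemma continuous_orderStat {X : Type*} [TopologicalSpace X] (s : Finset α) (k : ℕ)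
    {w : X → α → ℝ} (hw : ∀ p, Continuous fun x => w x p) :
    Continuous fun x => orderStat s k (w x) := by
  unfold orderStat
  split_ifs with h
  · refine Continuous.finset_inf'_apply h fun t _ => ?_
    split_ifs with ht
    · exact Continuous.finset_sup'_apply ht fun p _ => hw p
    · exact continuous_const
  · exact continuous_const

lemma orderStat_lt_orderStat {s t : Finset α} {k l : ℕ} (hk : k < #s) (hl : l < #t)
    {w : α → ℝ} (hst : ∀ p ∈ s, ∀ q ∈ t, w p < w q) : orderStat s k w < orderStat t l w := by
  obtain ⟨p, hp, hpw⟩ := exists_mem_apply_eq_orderStat hk w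
  obtain ⟨q, hq, hqw⟩ := exists_mem_apply_eq_orderStat hl w
  exact hpw ▸ hqw ▸ hst p hp q hq

lemma exists_orderStat_eq {s t : Finset α} {k l : ℕ} (hk : k < #s) (hl : l < #t)
    {u w : α → ℝ} (hu : ∀ p ∈ s, ∀ q ∈ t, u p < u q) :
    ∃ c : ℝ, orderStat s k (fun p => c * u p - w p) = orderStat t l (fun p => c * u p - w p) := by
  set W : ℝ → α → ℝ := fun c p => c * u p - w p
  set h : ℝ → ℝ := fun c => orderStat s k (W c) - orderStat t l (W c)
  have hcont : Continuous h :=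
    (continuous_orderStat s k fun p => by fun_prop).sub
      (continuous_orderStat t l fun p => by fun_prop)
  have hfar : ∀ p ∈ s, ∀ q ∈ t,
      (∀ᶠ c in atTop, W c p < W c q) ∧ ∀ᶠ c in atBot, W c q < W c p := by
    intro p hp q hq
    have hpos := sub_pos.2 (hu p hp q hq)
    refine ⟨((tendsto_id.atTop_mul_const hpos).eventually_gt_atTop (w q - w p)).mono
      fun c hc => ?_, ((tendsto_id.atBot_mul_const hpos).eventually_lt_atBot (w q - w p)).mono
      fun c hc => ?_⟩ <;> simp only [W, id] at hc ⊢ <;> linarith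
  obtain ⟨c₁, hc₁⟩ := (eventually_all_finset s).2 (fun p hp =>
    (eventually_all_finset t).2 fun q hq => (hfar p hp q hq).1) |>.exists
  obtain ⟨c₀, hc₀⟩ := (eventually_all_finset s).2 (fun p hp =>
    (eventually_all_finset t).2 fun q hq => (hfar p hp q hq).2) |>.exists
  have hneg : h c₁ ≤ 0 := sub_nonpos.2 (orderStat_lt_orderStat hk hl hc₁).le
  have hpos : 0 ≤ h c₀ :=
    sub_nonneg.2 (orderStat_lt_orderStat hl hk fun q hq p hp => hc₀ p hp q hq).le
  obtain ⟨c, hc⟩ := intermediate_value_univ c₁ c₀ hcont ⟨hneg, hpos⟩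
  exact ⟨c, sub_eq_zero.1 hc⟩

end OrderStatistic

section Geometry

variable {E : Type*} [AddCommGroup E] [Module ℝ E]

def NoThreeCollinear (s : Set E) : Prop :=
  ∀ p q r : E, p ∈ s → q ∈ s → r ∈ s → p ≠ q → p ≠ r → q ≠ r →
    ¬ Collinear ℝ ({p, q, r} : Set E)

lemma collinear_of_forall_apply_eq [FiniteDimensional ℝ E] (hE : finrank ℝ E = 2)
    {φ : Dual ℝ E} (hφ : φ ≠ 0) {s : Set E} {c : ℝ} (hs : ∀ x ∈ s, φ x = c) :
    Collinear ℝ s := by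
  have hspan : vectorSpan ℝ s ≤ LinearMap.ker φ := by
    rw [vectorSpan_def, Submodule.span_le]
    rintro _ ⟨x, hx, y, hy, rfl⟩
    simp [hs x hx, hs y hy]
  rw [collinear_iff_finrank_le_one]
  have := Dual.finrank_ker_add_one_of_ne_zero hφ
  have := Submodule.finrank_mono hspan
  omega

lemma card_filter_apply_eq_le_one [FiniteDimensional ℝ E] (hE : finrank ℝ E = 2)
    {s : Set E} (hs : NoThreeCollinear s) {φ : Dual ℝ E} (hφ : φ ≠ 0) {A : Finset E}
    (hA : ↑A ⊆ s) {x : E} (hx : x ∈ s) (hxA : x ∉ A) : #{p ∈ A | φ p = φ x} ≤ 1 := by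
  refine card_le_one.2 fun p hp q hq => by_contra fun hpq => ?_
  rw [mem_filter] at hp hq
  refine hs p q x (hA hp.1) (hA hq.1) hx hpq (ne_of_mem_of_not_mem hp.1 hxA)
    (ne_of_mem_of_not_mem hq.1 hxA) (collinear_of_forall_apply_eq hE hφ (c := φ x) ?_)
  rintro y (rfl | rfl | rfl) <;> simp_all

theorem exists_ham_sandwich_cut_of_forall_lt [FiniteDimensional ℝ E] [DecidableEq E]
    (hE : finrank ℝ E = 2) {P₁ P₂ : Finset E} {a b : ℕ}
    (h₁ : #P₁ = 2 * a + 1) (h₂ : #P₂ = 2 * b + 1) (hgp : NoThreeCollinear (↑(P₁ ∪ P₂) : Set E))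
    {f : Dual ℝ E} (hf : ∀ p ∈ P₁, ∀ q ∈ P₂, f p < f q) :
    ∃ p₁ ∈ P₁, ∃ p₂ ∈ P₂, ∃ φ : Dual ℝ E, φ ≠ 0 ∧ φ p₂ = φ p₁ ∧
      #{q ∈ P₁ | φ q < φ p₁} = a ∧ #{q ∈ P₁ | φ p₁ < φ q} = a ∧
      #{q ∈ P₂ | φ q < φ p₁} = b ∧ #{q ∈ P₂ | φ p₁ < φ q} = b := by
  have ha : a < #P₁ := by omega
  have hb : b < #P₂ := by omega
  have hf0 : f ≠ 0 := by
    obtain ⟨p, hp⟩ := card_pos.1 (by omega : 0 < #P₁)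
    obtain ⟨q, hq⟩ := card_pos.1 (by omega : 0 < #P₂)
    rintro rfl
    simpa using hf p hp q hq
  obtain ⟨g, hg⟩ := exists_linearIndependent_pair_of_one_lt_finrank
    (by rw [Subspace.dual_finrank_eq, hE]; norm_num) hf0
  obtain ⟨c, hc⟩ := exists_orderStat_eq ha hb (w := g) hf
  set φ := c • f - g
  have hφ : φ ≠ 0 := sub_ne_zero.2 ((LinearIndependent.pair_iff' hf0).1 hg c)
  have hφ_apply : (fun p => c * f p - g p) = φ := by ext; simp [φ]
  rw [hφ_apply] at hc
  obtain ⟨p₁, hp₁, hφp₁⟩ := exists_mem_apply_eq_orderStat ha φ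
  obtain ⟨p₂, hp₂, hφp₂⟩ := exists_mem_apply_eq_orderStat hb φ
  rw [← hc, ← hφp₁] at hφp₂
  have hsub₁ : P₁ ⊆ P₁ ∪ P₂ := subset_union_left
  have hsub₂ : P₂ ⊆ P₁ ∪ P₂ := subset_union_right
  have hu₁ : #{q ∈ P₁ | φ q = orderStat P₁ a φ} ≤ 1 := by
    rw [← hφp₁, ← hφp₂]
    exact card_filter_apply_eq_le_one hE hgp hφ (coe_subset.2 hsub₁) (hsub₂ hp₂)
      fun h => (hf p₂ h p₂ hp₂).false
  have hu₂ : #{q ∈ P₂ | φ q = orderStat P₂ b φ} ≤ 1 := by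
    rw [← hc, ← hφp₁]
    exact card_filter_apply_eq_le_one hE hgp hφ (coe_subset.2 hsub₂) (hsub₁ hp₁)
      fun h => (hf p₁ hp₁ p₁ h).false
  obtain ⟨c₁, c₂⟩ := card_filter_lt_orderStat_and_card_filter_orderStat_lt ha φ hu₁
  obtain ⟨c₃, c₄⟩ := card_filter_lt_orderStat_and_card_filter_orderStat_lt hb φ hu₂
  rw [← hc, ← hφp₁] at c₃ c₄
  rw [← hφp₁] at c₁ c₂
  exact ⟨p₁, hp₁, p₂, hp₂, φ, hφ, hφp₂, c₁, by omega, c₃, by omega⟩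

end Geometry

lemma exists_dual_lt_of_disjoint_convexHull {E : Type*} [TopologicalSpace E] [AddCommGroup E]
    [IsTopologicalAddGroup E] [Module ℝ E] [ContinuousSMul ℝ E] [LocallyConvexSpace ℝ E]
    [T2Space E] {s t : Set E} (hs : s.Finite) (ht : t.Finite)
    (hst : Disjoint (convexHull ℝ s) (convexHull ℝ t)) :
    ∃ f : StrongDual ℝ E, ∀ p ∈ s, ∀ q ∈ t, f p < f q := by
  obtain ⟨f, u, v, hfu, huv, hfv⟩ := geometric_hahn_banach_compact_closed (convex_convexHull ℝ s)
    (hs.isCompact_convexHull (𝕜 := ℝ)) (convex_convexHull ℝ t)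
    (ht.isCompact_convexHull (𝕜 := ℝ)).isClosed hst
  exact ⟨f, fun p hp q hq =>
    ((hfu p (subset_convexHull ℝ s hp)).trans huv).trans (hfv q (subset_convexHull ℝ t hq))⟩

lemma Module.Dual.apply_eq_mul_fst_add_mul_snd (φ : Dual ℝ (ℝ × ℝ)) (z : ℝ × ℝ) :
    φ z = φ (1, 0) * z.1 + φ (0, 1) * z.2 := by
  conv_lhs => rw [show z = z.1 • (1, 0) + z.2 • (0, 1) by ext <;> simp]
  rw [map_add, map_smul, map_smul, smul_eq_mul, smul_eq_mul, mul_comm, mul_comm z.2]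

lemma Finset.ncard_coe_sep {α : Type*} (s : Finset α) (p : α → Prop) [DecidablePred p] :
    {x ∈ (s : Set α) | p x}.ncard = #{x ∈ s | p x} := by
  rw [← Set.ncard_coe_finset, coe_filter]; rfl

/-- For separated point sets `P₁, P₂` of sizes `2a+1` and `2b+1` with the union in
general position, there are points `p₁ ∈ P₁`, `p₂ ∈ P₂` such that the line through them
has exactly `a` points of `P₁` and exactly `b` points of `P₂` on each open side. -/
theorem separated_ham_sandwich_exact (P₁ P₂ : Finset (ℝ × ℝ)) (a b : ℕ)
    (h₁ : P₁.card = 2 * a + 1) (h₂ : P₂.card = 2 * b + 1)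
    (hgp : ∀ p q r : ℝ × ℝ, p ∈ P₁ ∪ P₂ → q ∈ P₁ ∪ P₂ → r ∈ P₁ ∪ P₂ →
      p ≠ q → p ≠ r → q ≠ r → ¬ Collinear ℝ ({p, q, r} : Set (ℝ × ℝ)))
    (hsep : Disjoint (convexHull ℝ (P₁ : Set (ℝ × ℝ))) (convexHull ℝ (P₂ : Set (ℝ × ℝ)))) :
    ∃ p₁ ∈ P₁, ∃ p₂ ∈ P₂, ∃ α β γ : ℝ, (α, β) ≠ (0, 0) ∧
      α * p₁.1 + β * p₁.2 + γ = 0 ∧ α * p₂.1 + β * p₂.2 + γ = 0 ∧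
      {q ∈ (P₁ : Set (ℝ × ℝ)) | 0 < α * q.1 + β * q.2 + γ}.ncard = a ∧
      {q ∈ (P₁ : Set (ℝ × ℝ)) | α * q.1 + β * q.2 + γ < 0}.ncard = a ∧
      {q ∈ (P₂ : Set (ℝ × ℝ)) | 0 < α * q.1 + β * q.2 + γ}.ncard = b ∧
      {q ∈ (P₂ : Set (ℝ × ℝ)) | α * q.1 + β * q.2 + γ < 0}.ncard = b := by
  obtain ⟨f, hf⟩ := exists_dual_lt_of_disjoint_convexHull P₁.finite_toSet P₂.finite_toSet hsep
  obtain ⟨p₁, hp₁, p₂, hp₂, φ, hφ, hφp₂, c₁, c₂, c₃, c₄⟩ :=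
    exists_ham_sandwich_cut_of_forall_lt (by simp) h₁ h₂ hgp (f := f.toLinearMap) hf
  have hline (z : ℝ × ℝ) : φ (1, 0) * z.1 + φ (0, 1) * z.2 + -φ p₁ = φ z - φ p₁ := by
    rw [φ.apply_eq_mul_fst_add_mul_snd z, sub_eq_add_neg]
  refine ⟨p₁, hp₁, p₂, hp₂, φ (1, 0), φ (0, 1), -φ p₁, fun h => hφ ?_, ?_⟩
  · obtain ⟨hα, hβ⟩ := Prod.mk.inj h
    exact LinearMap.ext fun z => by rw [φ.apply_eq_mul_fst_add_mul_snd z, hα, hβ]; simp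
  simp only [hline, sub_self, hφp₂, sub_pos, sub_neg, ncard_coe_sep]
  exact ⟨trivial, trivial, c₂, c₁, c₄, c₃⟩
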